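/- Let A be a reduced commutative ring, K its total ring of fractions (the localization of A at the multiplicative set of nonzerodivisors), and B the integral closure of A in K, so that the natural map A → B is injective. Let J := {a ∈ A : a·x lies in the image of A for every x ∈ B} be the conductor ideal. Then the ideal of B generated by the image of J equals the image of J (i.e., J is also an ideal of B), and the natural ring homomorphism A → (A/J) ×_{B/(J·B)} B, sending a to (a mod J, a), is an isomorphism, where the fiber product is taken with respect to the induced map A/J → B/(J·B) and the quotient map B → B/(J·B). -/

import Mathlib

/-- The fiber product ring `R ×_T S` of two ring homomorphisms `u : R →+* T` and
`v : S →+* T`, realized as the subring `{(r, s) | u r = v s}` of `R × S`. -/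
def fiberProd {R S T : Type*} [CommRing R] [CommRing S] [CommRing T]
    (u : R →+* T) (v : S →+* T) : Subring (R × S) :=
  RingHom.eqLocus (u.comp (RingHom.fst R S)) (v.comp (RingHom.snd R S))

/-- The conductor ideal `{a ∈ A | φ(a) · x ∈ im φ for all x ∈ B}` of a ring
homomorphism `φ : A →+* B`. -/
def conductorIdeal {A B : Type*} [CommRing A] [CommRing B] (φ : A →+* B) : Ideal A where
  carrier := {a | ∀ x : B, φ a * x ∈ φ.range}
  zero_mem' := by
    simp only [Set.mem_setOf_eq]
    intro x
    rw [map_zero, zero_mul]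
    exact zero_mem _
  add_mem' := by
    intro a b ha hb x
    have h : φ (a + b) * x = φ a * x + φ b * x := by rw [map_add, add_mul]
    rw [h]
    exact add_mem (ha x) (hb x)
  smul_mem' := by
    intro c a ha x
    have h : φ (c • a) * x = φ a * (φ c * x) := by
      simp only [smul_eq_mul, map_mul]; ring
    rw [h]
    exact ha (φ c * x)

/-!
If `a ∈ J` and `c ∈ B`, then `c · a = d` with `d ∈ A`, and `d` lies in `J` again because
`d · y = a · (c y)`; so `J` is closed under multiplication by `B` and is its own extension `J·B`. Consequently an element `(a mod J, b)` of
the fiber product has `b - a ∈ J·B = J`, and `a + (b - a) ∈ A` is its unique preimage.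
-/

section Conductor

variable {A B : Type*} [CommRing A] [CommRing B] (φ : A →+* B)

theorem exists_mem_conductorIdeal_map_eq_mul {a : A} (ha : a ∈ conductorIdeal φ) (c : B) :
    ∃ d ∈ conductorIdeal φ, φ d = c * φ a := by
  obtain ⟨d, hd⟩ := ha c
  refine ⟨d, fun y => ?_, by rw [hd, mul_comm]⟩
  rw [hd, mul_assoc]
  exact ha (c * y)

theorem coe_map_conductorIdeal :
    (Ideal.map φ (conductorIdeal φ) : Set B) = φ '' conductorIdeal φ := by
  refine subset_antisymm (fun x hx => ?_) Ideal.subset_span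
  induction hx using Submodule.span_induction with
  | mem x hx => exact hx
  | zero => exact ⟨0, zero_mem _, map_zero φ⟩
  | add x y _ _ hx hy =>
    obtain ⟨a, ha, rfl⟩ := hx
    obtain ⟨b, hb, rfl⟩ := hy
    exact ⟨a + b, add_mem ha hb, map_add φ a b⟩
  | smul c x _ hx =>
    obtain ⟨a, ha, rfl⟩ := hx
    exact exists_mem_conductorIdeal_map_eq_mul φ ha c

end Conductor

theorem mem_fiberProd {R S T : Type*} [CommRing R] [CommRing S] [CommRing T]
    {u : R →+* T} {v : S →+* T} {x : R × S} : x ∈ fiberProd u v ↔ u x.1 = v x.2 :=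
  Iff.rfl

section FiberProd

variable {A B : Type*} [CommRing A] [CommRing B] (φ : A →+* B) (J : Ideal A)

def toFiberProd : A →+*
    fiberProd (Ideal.quotientMap (J.map φ) φ Ideal.le_comap_map) (Ideal.Quotient.mk (J.map φ)) :=
  ((Ideal.Quotient.mk J).prod φ).codRestrict _ fun _ => mem_fiberProd.mpr Ideal.quotientMap_mk

@[simp]
theorem coe_toFiberProd_apply (a : A) :
    (toFiberProd φ J a : (A ⧸ J) × B) = (Ideal.Quotient.mk J a, φ a) :=
  rfl

theorem toFiberProd_bijective (hφ : Function.Injective φ) (hJ : (J.map φ : Set B) ⊆ φ '' J) :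
    Function.Bijective (toFiberProd φ J) := by
  refine ⟨fun a a' h => hφ ?_, ?_⟩
  · simpa using congrArg Prod.snd (Subtype.ext_iff.mp h)
  rintro ⟨⟨q, b⟩, hqb⟩
  obtain ⟨a, rfl⟩ := Ideal.Quotient.mk_surjective q
  rw [mem_fiberProd, Ideal.quotientMap_mk, eq_comm, Ideal.Quotient.eq] at hqb
  obtain ⟨j, hj, hφj⟩ := hJ hqb
  refine ⟨a + j, Subtype.ext (Prod.ext ?_ ?_)⟩
  · change Ideal.Quotient.mk J (a + j) = Ideal.Quotient.mk J a
    rw [map_add, Ideal.Quotient.eq_zero_iff_mem.mpr hj, add_zero]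
  · change φ (a + j) = b
    rw [map_add, hφj, add_sub_cancel]

end FiberProd

theorem stmt7_general (A : Type*) [CommRing A] :
    -- `B` is the integral closure of `A` in its total ring of fractions,
    -- `φ : A → B` the natural (injective) map, and `J` the conductor ideal.
    letI K := FractionRing A;
    letI B := integralClosure A K;
    letI φ : A →+* ↥B := algebraMap A ↥B;
    letI J : Ideal A := conductorIdeal φ;
    -- `J` is also an ideal of `B`: the ideal generated by `φ(J)` is just the set `φ(J)`
    ((Ideal.map φ J : Ideal ↥B) : Set ↥B) = ⇑φ '' (J : Set A) ∧
    -- and the natural map `A → (A/J) ×_{B/(J·B)} B` is an isomorphism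
    ∃ e : A ≃+* ↥(fiberProd (T := ↥B ⧸ Ideal.map φ J)
        (Ideal.quotientMap (Ideal.map φ J) φ Ideal.le_comap_map)
        (Ideal.Quotient.mk (Ideal.map φ J))),
      ∀ a : A, (e a).val = (Ideal.Quotient.mk J a, φ a) := by
  have hφ : Function.Injective (algebraMap A (integralClosure A (FractionRing A))) :=
    fun a a' h => IsFractionRing.injective A (FractionRing A) (congrArg Subtype.val h)
  have hJ := coe_map_conductorIdeal (algebraMap A (integralClosure A (FractionRing A)))
  exact ⟨hJ, RingEquiv.ofBijective _ (toFiberProd_bijective _ _ hφ hJ.subset), fun _ => rfl⟩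

theorem stmt7 (A : Type*) [CommRing A] [IsReduced A] :
    -- `B` is the integral closure of `A` in its total ring of fractions,
    -- `φ : A → B` the natural (injective) map, and `J` the conductor ideal.
    letI K := FractionRing A;
    letI B := integralClosure A K;
    letI φ : A →+* ↥B := algebraMap A ↥B;
    letI J : Ideal A := conductorIdeal φ;
    -- `J` is also an ideal of `B`: the ideal generated by `φ(J)` is just the set `φ(J)`
    ((Ideal.map φ J : Ideal ↥B) : Set ↥B) = ⇑φ '' (J : Set A) ∧
    -- and the natural map `A → (A/J) ×_{B/(J·B)} B` is an isomorphism
    ∃ e : A ≃+* ↥(fiberProd (T := ↥B ⧸ Ideal.map φ J)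
        (Ideal.quotientMap (Ideal.map φ J) φ Ideal.le_comap_map)
        (Ideal.Quotient.mk (Ideal.map φ J))),
      ∀ a : A, (e a).val = (Ideal.Quotient.mk J a, φ a) :=
  stmt7_general A
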